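/- arXiv:2601.07882 — 2 statements merged into one kernel-verified Lean document; each statement's English description precedes it below -/
import Mathlib

section
/- Let E be a real inner product space, let f : E → ℝ be differentiable with L-Lipschitz gradient (L > 0), let w* ∈ E satisfy ∇f(w*) = 0, and let μ > 0 with L ≥ 9μ. Suppose (w_k)_{k≥0} is a sequence in E such that, with step sizes η_k = (3/μ)/(k + L/μ) and some constant Φ ≥ 0, it holds for every k ≥ 0 that ‖w_{k+1} − w*‖² ≤ (1 − 3μ η_k)‖w_k − w*‖² + η_k² Φ. Then for every K ≥ 0, f(w_K) − f(w*) ≤ (L / (2(K + L/μ))) · [ 9Φ/(8μ²) + (L/μ + 1)‖w_0 − w*‖² ]. -/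
/-!
Since `∇f(w*) = 0`, the Lipschitz gradient gives `f w - f w* ≤ L/2 ‖w - w*‖²` (compare
`f (x + t • v)` with its quadratic model along the segment). With `t_k = k + L/μ` the recursion
reads `d_{k+1} ≤ (1 - 9/t_k) d_k + B/t_k²` for `d_k = ‖w_k - w*‖²` and `B = 9Φ/μ²`, and induction
gives `d_k ≤ C/t_k` for `C = B/8 + (L/μ + 1) d_0`, because `(t - 9) C + B ≤ (t - 1) C` and
`(t - 1)(t + 1) ≤ t²`.
-/

open RealInnerProductSpace

theorem sub_le_inner_add_of_lipschitz_gradient {E : Type*} [NormedAddCommGroup E]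
    [InnerProductSpace ℝ E] {f : E → ℝ} {f' : E → E} {L : ℝ}
    (hf : ∀ x, HasFDerivAt f (innerSL ℝ (f' x)) x)
    (hlip : ∀ x y, ‖f' x - f' y‖ ≤ L * ‖x - y‖) (x y : E) :
    f y - f x ≤ ⟪f' x, y - x⟫ + L / 2 * ‖y - x‖ ^ 2 := by
  set v := y - x
  set g : ℝ → ℝ := fun t ↦ f (x + t • v) - t * ⟪f' x, v⟫ - L / 2 * t ^ 2 * ‖v‖ ^ 2
  have hg : ∀ t, HasDerivAt g (⟪f' (x + t • v) - f' x, v⟫ - L * t * ‖v‖ ^ 2) t := by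
    intro t
    have hpath : HasDerivAt (fun t : ℝ ↦ x + t • v) v t :=
      ((hasDerivAt_id t).smul_const v).const_add x |>.congr_deriv (one_smul ℝ v)
    refine ((((hf _).comp_hasDerivAt t hpath).sub ((hasDerivAt_id t).mul_const ⟪f' x, v⟫)).sub
      (((hasDerivAt_pow 2 t).const_mul (L / 2)).mul_const (‖v‖ ^ 2))).congr_deriv ?_
    rw [innerSL_apply_apply, inner_sub_left]
    ring
  have hg' : ∀ t ∈ interior (Set.Ici (0 : ℝ)), deriv g t ≤ 0 := by
    intro t ht
    rw [interior_Ici] at ht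
    rw [(hg t).deriv, sub_nonpos]
    calc ⟪f' (x + t • v) - f' x, v⟫ ≤ ‖f' (x + t • v) - f' x‖ * ‖v‖ := real_inner_le_norm _ _
      _ ≤ L * ‖t • v‖ * ‖v‖ := by
        gcongr
        simpa using hlip (x + t • v) x
      _ = L * t * ‖v‖ ^ 2 := by rw [norm_smul, Real.norm_of_nonneg ht.le]; ring
  have hg10 : g 1 ≤ g 0 :=
    antitoneOn_of_deriv_nonpos (convex_Ici 0) (fun t _ ↦ (hg t).continuousAt.continuousWithinAt)
      (fun t _ ↦ (hg t).differentiableAt.differentiableWithinAt) hg' Set.self_mem_Ici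
      (Set.mem_Ici.2 zero_le_one) zero_le_one
  simp only [g, v, one_smul, zero_smul, add_zero, add_sub_cancel, one_mul, one_pow, zero_mul,
    sub_zero, zero_pow two_ne_zero, mul_zero] at hg10
  linarith

theorem le_div_of_le_one_sub_div_mul_add_div_sq {d : ℕ → ℝ} {a c B C : ℝ}
    (hc : 1 < c) (hca : c ≤ a) (hB : 0 ≤ B) (hBC : B ≤ (c - 1) * C) (h0 : a * d 0 ≤ C)
    (hd : ∀ k : ℕ, d (k + 1) ≤ (1 - c / (k + a)) * d k + B / (k + a) ^ 2) (k : ℕ) :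
    d k ≤ C / (k + a) := by
  have hC : 0 ≤ C := nonneg_of_mul_nonneg_right (hB.trans hBC) (by linarith)
  induction k with
  | zero => simpa [le_div_iff₀ (by linarith : 0 < a), mul_comm] using h0
  | succ k ih =>
    set t : ℝ := k + a
    have ht : c ≤ t := by simp only [t]; linarith [k.cast_nonneg (α := ℝ)]
    have ht0 : 0 < t := by linarith
    calc d (k + 1) ≤ (1 - c / t) * d k + B / t ^ 2 := hd k
      _ ≤ (1 - c / t) * (C / t) + B / t ^ 2 := by
        gcongr
        rw [sub_nonneg, div_le_one ht0]; exact ht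
      _ = ((t - c) * C + B) / t ^ 2 := by field_simp
      _ ≤ (t - 1) * C / t ^ 2 := by gcongr; linarith
      _ ≤ C / (t + 1) := by
        rw [div_le_div_iff₀ (by positivity) (by positivity)]
        nlinarith
      _ = C / ((k + 1 : ℕ) + a) := by push_cast; ring

/-- Convergence bound of Theorem 1 (SPQFL convergence rate).
`f` is differentiable with `L`-Lipschitz gradient `f'`, `∇f(w*) = 0`, `μ > 0`, `L ≥ 9μ`,
and the squared distances to the optimum satisfy the stated recursion with step sizes
`η_k = (3/μ)/(k + L/μ)`. -/
theorem spqfl_convergence {E : Type*} [NormedAddCommGroup E] [InnerProductSpace ℝ E]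
    (f : E → ℝ) (f' : E → E) (L μ : ℝ) (hL : 0 < L) (hμ : 0 < μ) (hLμ : L ≥ 9 * μ)
    (hdiff : ∀ x, HasFDerivAt f (innerSL ℝ (f' x)) x)
    (hlip : ∀ x y, ‖f' x - f' y‖ ≤ L * ‖x - y‖)
    (wstar : E) (hstar : f' wstar = 0)
    (Φ : ℝ) (hΦ : 0 ≤ Φ)
    (η : ℕ → ℝ) (hη : ∀ k : ℕ, η k = (3 / μ) / ((k : ℝ) + L / μ))
    (w : ℕ → E)
    (hrec : ∀ k : ℕ, ‖w (k + 1) - wstar‖ ^ 2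
      ≤ (1 - 3 * μ * η k) * ‖w k - wstar‖ ^ 2 + (η k) ^ 2 * Φ) :
    ∀ K : ℕ, f (w K) - f wstar
      ≤ L / (2 * ((K : ℝ) + L / μ))
        * (9 * Φ / (8 * μ ^ 2) + (L / μ + 1) * ‖w 0 - wstar‖ ^ 2) := by
  intro K
  set a := L / μ
  have ha : 9 ≤ a := by rw [le_div_iff₀ hμ]; linarith
  have hrec' (k : ℕ) : ‖w (k + 1) - wstar‖ ^ 2
      ≤ (1 - 9 / (k + a)) * ‖w k - wstar‖ ^ 2 + 9 * Φ / μ ^ 2 / (k + a) ^ 2 := by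
    have hk : (k : ℝ) + a ≠ 0 := by positivity
    convert hrec k using 3 <;> rw [hη k] <;> field_simp <;> ring
  have hB : 9 * Φ / μ ^ 2 = 8 * (9 * Φ / (8 * μ ^ 2)) := by field_simp
  have hΦμ : 0 ≤ 9 * Φ / (8 * μ ^ 2) := by positivity
  have hw0 : 0 ≤ ‖w 0 - wstar‖ ^ 2 := sq_nonneg _
  have hdist := le_div_of_le_one_sub_div_mul_add_div_sq (d := fun k ↦ ‖w k - wstar‖ ^ 2)
    (C := 9 * Φ / (8 * μ ^ 2) + (a + 1) * ‖w 0 - wstar‖ ^ 2) (by norm_num) ha (by positivity)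
    (by nlinarith) (by linarith) hrec' K
  calc f (w K) - f wstar ≤ L / 2 * ‖w K - wstar‖ ^ 2 := by
        simpa [hstar] using sub_le_inner_add_of_lipschitz_gradient hdiff hlip wstar (w K)
    _ ≤ L / 2 * ((9 * Φ / (8 * μ ^ 2) + (a + 1) * ‖w 0 - wstar‖ ^ 2) / (K + a)) := by gcongr
    _ = _ := by field_simp
end

section
/- Let E be a real inner product space, G ≥ 0, T a positive integer, η > 0, and η' ≥ 0 with (η')² ≤ η/(2T). Let w' ∈ E, and for each n ∈ {1, …, N} let τ_n ≤ T be a natural number and v_{n,1}, …, v_{n,τ_n} ∈ E be vectors with ‖v_{n,t}‖ ≤ G for all t. Define w_n = w' − η' ∑_{t=1}^{τ_n} v_{n,t} and w̄ = (1/N)∑_{n=1}^N w_n. Then (1/N)∑_{n=1}^N ‖w̄ − w_n‖² ≤ (1/2) η T G². -/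
/-! Averaging can only reduce the spread: the mean `w̄` minimises `c ↦ ∑ ‖c - w n‖²`, so the
average squared distance to `w̄` is at most the average squared distance to the common starting
point `w'`. Each device moves at most `η' T G` away from `w'`, and `η'² (T G)² ≤ η T G² / 2`. -/

open Finset

section Variance

variable {E : Type*} [NormedAddCommGroup E] [InnerProductSpace ℝ E] {ι : Type*}

theorem sum_norm_sub_sq_eq_sum_norm_average_sub_sq_add (s : Finset ι) (x : ι → E) (c : E) :
    ∑ i ∈ s, ‖c - x i‖ ^ 2 =
      ∑ i ∈ s, ‖(#s : ℝ)⁻¹ • ∑ j ∈ s, x j - x i‖ ^ 2 +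
        #s * ‖c - (#s : ℝ)⁻¹ • ∑ j ∈ s, x j‖ ^ 2 := by
  set m := (#s : ℝ)⁻¹ • ∑ j ∈ s, x j
  rcases s.eq_empty_or_nonempty with rfl | hs
  · simp
  have hsum : ∑ i ∈ s, (m - x i) = 0 := by
    have hcard : (#s : ℝ) ≠ 0 := by exact_mod_cast hs.card_pos.ne'
    rw [sum_sub_distrib, sum_const, ← Nat.cast_smul_eq_nsmul ℝ, smul_inv_smul₀ hcard, sub_self]
  have hcross : ∑ i ∈ s, inner ℝ (m - x i) (c - m) = 0 := by rw [← sum_inner, hsum, inner_zero_left]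
  calc ∑ i ∈ s, ‖c - x i‖ ^ 2 = ∑ i ∈ s, ‖(m - x i) + (c - m)‖ ^ 2 := by
        simp only [sub_add_sub_cancel']
    _ = ∑ i ∈ s, ‖m - x i‖ ^ 2 + 2 * ∑ i ∈ s, inner ℝ (m - x i) (c - m) + #s * ‖c - m‖ ^ 2 := by
        simp only [norm_add_sq_real, sum_add_distrib, mul_sum, sum_const, nsmul_eq_mul]
    _ = _ := by rw [hcross, mul_zero, add_zero]

theorem sum_norm_average_sub_sq_le (s : Finset ι) (x : ι → E) (c : E) :
    ∑ i ∈ s, ‖(#s : ℝ)⁻¹ • ∑ j ∈ s, x j - x i‖ ^ 2 ≤ ∑ i ∈ s, ‖c - x i‖ ^ 2 := by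
  rw [sum_norm_sub_sq_eq_sum_norm_average_sub_sq_add s x c]
  exact le_add_of_nonneg_right (by positivity)

end Variance

theorem inv_card_mul_sum_le {ι : Type*} (s : Finset ι) (f : ι → ℝ) {c : ℝ} (hc : 0 ≤ c)
    (hf : ∀ i ∈ s, f i ≤ c) : (#s : ℝ)⁻¹ * ∑ i ∈ s, f i ≤ c := by
  rcases s.eq_empty_or_nonempty with rfl | hs
  · simpa using hc
  rw [inv_mul_le_iff₀ (by exact_mod_cast hs.card_pos)]
  simpa using sum_le_card_nsmul s f c hf

theorem norm_sum_range_le_mul {E : Type*} [SeminormedAddCommGroup E] {v : ℕ → E} {G : ℝ}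
    (hG : 0 ≤ G) (hv : ∀ t, ‖v t‖ ≤ G) {τ T : ℕ} (hτ : τ ≤ T) :
    ‖∑ t ∈ range τ, v t‖ ≤ T * G :=
  calc ‖∑ t ∈ range τ, v t‖ ≤ τ * G := by simpa using norm_sum_le_of_le (range τ) fun t _ => hv t
    _ ≤ T * G := by gcongr

theorem norm_local_drift_sq_le {E : Type*} [SeminormedAddCommGroup E] [NormedSpace ℝ E]
    {v : ℕ → E} {G : ℝ} (hG : 0 ≤ G) (hv : ∀ t, ‖v t‖ ≤ G) {τ T : ℕ} (hτ : τ ≤ T) (hT : 0 < T)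
    {η η' : ℝ} (hη'2 : η' ^ 2 ≤ η / (2 * (T : ℝ))) :
    ‖η' • ∑ t ∈ range τ, v t‖ ^ 2 ≤ (1 / 2) * η * (T : ℝ) * G ^ 2 := by
  have hTpos : (0 : ℝ) < T := by exact_mod_cast hT
  calc ‖η' • ∑ t ∈ range τ, v t‖ ^ 2 = η' ^ 2 * ‖∑ t ∈ range τ, v t‖ ^ 2 := by
        rw [norm_smul, mul_pow, Real.norm_eq_abs, sq_abs]
    _ ≤ η / (2 * T) * (T * G) ^ 2 := by
        gcongr
        · exact (sq_nonneg η').trans hη'2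
        · exact norm_sum_range_le_mul hG hv hτ
    _ = (1 / 2) * η * T * G ^ 2 := by field_simp

theorem client_drift_bound_general {E : Type*} [NormedAddCommGroup E] [InnerProductSpace ℝ E]
    (G : ℝ) (hG : 0 ≤ G) (T : ℕ) (hT : 0 < T) (η : ℝ) (hη : 0 < η)
    (η' : ℝ) (hη'2 : η' ^ 2 ≤ η / (2 * (T : ℝ)))
    (w' : E) (N : ℕ)
    (τ : Fin N → ℕ) (hτ : ∀ n, τ n ≤ T)
    (v : Fin N → ℕ → E) (hv : ∀ n t, ‖v n t‖ ≤ G)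
    (w : Fin N → E) (hw : ∀ n, w n = w' - η' • ∑ t ∈ Finset.range (τ n), v n t)
    (wbar : E) (hwbar : wbar = (N : ℝ)⁻¹ • ∑ n, w n) :
    (N : ℝ)⁻¹ * ∑ n, ‖wbar - w n‖ ^ 2 ≤ (1 / 2) * η * (T : ℝ) * G ^ 2 := by
  have hcard : (#(univ : Finset (Fin N)) : ℝ) = N := by simp
  have hdrift (n : Fin N) : ‖w' - w n‖ ^ 2 ≤ (1 / 2) * η * (T : ℝ) * G ^ 2 := by
    rw [hw n, sub_sub_cancel]
    exact norm_local_drift_sq_le hG (hv n) (hτ n) hT hη'2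
  calc (N : ℝ)⁻¹ * ∑ n, ‖wbar - w n‖ ^ 2 ≤ (N : ℝ)⁻¹ * ∑ n, ‖w' - w n‖ ^ 2 := by
        refine mul_le_mul_of_nonneg_left ?_ (by positivity)
        simpa only [hwbar, hcard] using sum_norm_average_sub_sq_le univ w w'
    _ ≤ (1 / 2) * η * (T : ℝ) * G ^ 2 := by
        simpa only [hcard] using inv_card_mul_sum_le univ _ (by positivity) fun n _ => hdrift n

/-- Lemma 2: client-drift bound. Each of `N` devices performs at most `T`
local steps of size `η'` from a common point `w'` with update vectors of norm at most `G`,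
where `η'² ≤ η/(2T)`; then the average squared divergence of the local iterates from their
mean is at most `(1/2) η T G²`. -/
theorem client_drift_bound {E : Type*} [NormedAddCommGroup E] [InnerProductSpace ℝ E]
    (G : ℝ) (hG : 0 ≤ G) (T : ℕ) (hT : 0 < T) (η : ℝ) (hη : 0 < η)
    (η' : ℝ) (hη' : 0 ≤ η') (hη'2 : η' ^ 2 ≤ η / (2 * (T : ℝ)))
    (w' : E) (N : ℕ)
    (τ : Fin N → ℕ) (hτ : ∀ n, τ n ≤ T)
    (v : Fin N → ℕ → E) (hv : ∀ n t, ‖v n t‖ ≤ G)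
    (w : Fin N → E) (hw : ∀ n, w n = w' - η' • ∑ t ∈ Finset.range (τ n), v n t)
    (wbar : E) (hwbar : wbar = (N : ℝ)⁻¹ • ∑ n, w n) :
    (N : ℝ)⁻¹ * ∑ n, ‖wbar - w n‖ ^ 2 ≤ (1 / 2) * η * (T : ℝ) * G ^ 2 :=
  client_drift_bound_general G hG T hT η hη η' hη'2 w' N τ hτ v hv w hw wbar hwbar
end
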